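/- For ρ, r, ϑ, Θ > 0 and u, U ∈ ℝ³, the relative energy for the perfect gas, E(ρ,ϑ,u | r,Θ,U) = ½ρ|u−U|² + ρc_vϑ − Θρ log(ϑ^{c_v}/ρ) − (∂_ρ H_Θ)(r,Θ)(ρ − r) − H_Θ(r,Θ), where H_Θ(ρ,ϑ) = ρc_vϑ − Θρ log(ϑ^{c_v}/ρ), satisfies E(ρ,ϑ,u | r,Θ,U) ≥ 0, with equality if and only if ρ = r, ϑ = Θ, u = U. -/

import Mathlib

/-!
Write `φ(x) = x - 1 - log x`; by `log x ≤ x - 1` it is nonnegative on `(0, ∞)` and vanishes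
only at `1`. Since `H_Θ(ρ, ϑ) = ρ c_v (ϑ - Θ log ϑ) + Θ ρ log ρ` is linear in `ρ` apart from
`Θ ρ log ρ`, the relative energy splits as
`½ ρ |u - U|² + c_v ρ Θ φ(ϑ/Θ) + Θ ρ φ(r/ρ)`, a sum of three nonnegative terms.
-/

open Real

/-- The ballistic free energy of the perfect gas,
`H_Θ(ρ,ϑ) = ρ e(ρ,ϑ) - Θ ρ s(ρ,ϑ)` with `e = c_vϑ`, `s = log(ϑ^{c_v}/ρ)`. -/
noncomputable def ballisticH (c_v Θ ρ ϑ : ℝ) : ℝ :=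
  ρ * (c_v * ϑ) - Θ * ρ * Real.log (ϑ ^ c_v / ρ)

/-- The relative energy for the perfect gas, built from the ballistic free energy. -/
noncomputable def relEnergy (c_v : ℝ) (ρ ϑ : ℝ) (u : EuclideanSpace ℝ (Fin 3))
    (r Θ : ℝ) (U : EuclideanSpace ℝ (Fin 3)) : ℝ :=
  (1 / 2) * ρ * ‖u - U‖ ^ 2 + ρ * (c_v * ϑ) - Θ * ρ * Real.log (ϑ ^ c_v / ρ)
    - deriv (fun x : ℝ => ballisticH c_v Θ x Θ) r * (ρ - r) - ballisticH c_v Θ r Θ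

namespace Real

lemma sub_one_sub_log_nonneg {x : ℝ} (hx : 0 < x) : 0 ≤ x - 1 - log x := by
  linarith [log_le_sub_one_of_pos hx]

lemma sub_one_sub_log_eq_zero_iff {x : ℝ} (hx : 0 < x) : x - 1 - log x = 0 ↔ x = 1 := by
  refine ⟨fun h => ?_, fun h => by simp [h]⟩
  by_contra hne
  linarith [log_lt_sub_one_of_pos hx hne]

end Real

lemma hasDerivAt_ballisticH_fst (c_v : ℝ) {Θ r : ℝ} (hΘ : 0 < Θ) (hr : 0 < r) :
    HasDerivAt (fun x : ℝ => ballisticH c_v Θ x Θ)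
      (c_v * Θ * (1 - log Θ) + Θ * (log r + 1)) r := by
  have hexpl : HasDerivAt (fun x : ℝ => x * (c_v * Θ * (1 - log Θ)) + Θ * (x * log x))
      (c_v * Θ * (1 - log Θ) + Θ * (log r + 1)) r := by
    have h := ((hasDerivAt_id' r).mul_const (c_v * Θ * (1 - log Θ))).add
      ((hasDerivAt_mul_log hr.ne').const_mul Θ)
    rwa [one_mul] at h
  refine hexpl.congr_of_eventuallyEq ?_
  filter_upwards [eventually_gt_nhds hr] with x hx
  rw [ballisticH, log_div (by positivity) hx.ne', log_rpow hΘ]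
  ring

lemma relEnergy_eq (c_v : ℝ) {ρ r ϑ Θ : ℝ} (hρ : 0 < ρ) (hr : 0 < r) (hϑ : 0 < ϑ) (hΘ : 0 < Θ)
    (u U : EuclideanSpace ℝ (Fin 3)) :
    relEnergy c_v ρ ϑ u r Θ U
      = 1 / 2 * ρ * ‖u - U‖ ^ 2 + c_v * ρ * Θ * (ϑ / Θ - 1 - log (ϑ / Θ))
        + Θ * ρ * (r / ρ - 1 - log (r / ρ)) := by
  rw [relEnergy, (hasDerivAt_ballisticH_fst c_v hΘ hr).deriv, ballisticH,
    log_div (by positivity) hρ.ne', log_rpow hϑ, log_div (by positivity) hr.ne', log_rpow hΘ,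
    log_div hϑ.ne' hΘ.ne', log_div hr.ne' hρ.ne']
  field_simp
  ring

/-- Nonnegativity and strict coercivity of the relative energy of the perfect gas:
`E(ρ,ϑ,u | r,Θ,U) ≥ 0`, with equality iff `ρ = r`, `ϑ = Θ`, `u = U`. -/
theorem stmt_13 (c_v : ℝ) (hcv : 0 < c_v) (ρ r ϑ Θ : ℝ)
    (hρ : 0 < ρ) (hr : 0 < r) (hϑ : 0 < ϑ) (hΘ : 0 < Θ)
    (u U : EuclideanSpace ℝ (Fin 3)) :
    0 ≤ relEnergy c_v ρ ϑ u r Θ U ∧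
      (relEnergy c_v ρ ϑ u r Θ U = 0 ↔ ρ = r ∧ ϑ = Θ ∧ u = U) := by
  have hkin : 0 ≤ 1 / 2 * ρ * ‖u - U‖ ^ 2 := by positivity
  have hthermal : 0 ≤ c_v * ρ * Θ * (ϑ / Θ - 1 - log (ϑ / Θ)) :=
    mul_nonneg (by positivity) (sub_one_sub_log_nonneg (by positivity))
  have hdensity : 0 ≤ Θ * ρ * (r / ρ - 1 - log (r / ρ)) :=
    mul_nonneg (by positivity) (sub_one_sub_log_nonneg (by positivity))
  rw [relEnergy_eq c_v hρ hr hϑ hΘ u U]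
  refine ⟨add_nonneg (add_nonneg hkin hthermal) hdensity, ?_⟩
  rw [add_eq_zero_iff_of_nonneg (add_nonneg hkin hthermal) hdensity,
    add_eq_zero_iff_of_nonneg hkin hthermal]
  simp only [mul_eq_zero, hρ.ne', hΘ.ne', hcv.ne', one_div, inv_eq_zero, OfNat.ofNat_ne_zero,
    false_or, pow_eq_zero_iff two_ne_zero, norm_sub_eq_zero_iff,
    sub_one_sub_log_eq_zero_iff (div_pos hϑ hΘ), div_eq_one_iff_eq hΘ.ne',
    sub_one_sub_log_eq_zero_iff (div_pos hr hρ), div_eq_one_iff_eq hρ.ne']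
  tauto
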